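/- arXiv:1408.2017 — 4 statements merged into one kernel-verified Lean document; each statement's English description precedes it below -/
import Mathlib

section
/- Let δ > 0, φ(x) = √(1-x²), w_δ(x) = √((1-x-δφ(x)/2)(1+x-δφ(x)/2)), and D_δ = {x : 1 - δφ(x)/2 ≥ |x|} \ {±1}. Then for every x ∈ D_δ and every u ∈ [-|x| - δφ(x)/2, |x| + δφ(x)/2], one has w_δ(x) ≤ φ(u). -/
noncomputable def phi (x : ℝ) : ℝ := Real.sqrt (1 - x ^ 2)

noncomputable def w (δ x : ℝ) : ℝ :=
  Real.sqrt ((1 - x - δ * phi x / 2) * (1 + x - δ * phi x / 2))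

theorem stmt0 (δ : ℝ) (hδ : 0 < δ) (x : ℝ) (hx : x ∈ Set.Ioo (-1 : ℝ) 1)
    (hxD : |x| ≤ 1 - δ * phi x / 2) (u : ℝ)
    (hu : u ∈ Set.Icc (-(|x| + δ * phi x / 2)) (|x| + δ * phi x / 2)) :
    w δ x ≤ phi u := by
  obtain ⟨h1, h2⟩ := hu
  set a := δ * phi x / 2 with ha
  have ha0 : 0 ≤ a := by
    have : 0 ≤ phi x := Real.sqrt_nonneg _
    positivity
  have hxa : |x| ≤ 1 - a := hxD
  have hu2 : u ^ 2 ≤ (|x| + a) ^ 2 := by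
    have := abs_le.mpr ⟨h1, h2⟩
    nlinarith [abs_nonneg u, sq_abs u, abs_nonneg x]
  have key : (1 - x - a) * (1 + x - a) ≤ 1 - u ^ 2 := by
    nlinarith [sq_abs x, abs_nonneg x]
  exact Real.sqrt_le_sqrt key
end

section
/- Let δ > 0, φ(x) = √(1-x²), w_δ(x) = √((1-x-δφ(x)/2)(1+x-δφ(x)/2)). Then φ(x) ≤ 2·w_δ(x) for all x in D_{2δ} = {x ∈ (-1,1) : |x| ≤ 1 - δφ(x)}. -/
theorem stmt2 (δ : ℝ) (hδ : 0 < δ) (x : ℝ) (hx : x ∈ Set.Ioo (-1 : ℝ) 1)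
    (hxD : δ * phi x ≤ 1 - |x|) :
    phi x ≤ 2 * w δ x := by
  set a := δ * phi x / 2 with ha_def
  have ha0 : 0 ≤ a := by
    have : 0 ≤ phi x := Real.sqrt_nonneg _
    positivity
  have ha : 2 * a ≤ 1 - |x| := by
    simp only [ha_def]; linarith
  have habs : |x| < 1 := abs_lt.mpr ⟨hx.1, hx.2⟩
  have key : 1 - x ^ 2 ≤ 4 * ((1 - x - a) * (1 + x - a)) := by
    nlinarith [sq_abs x, abs_nonneg x, sq_nonneg (2 * (1 - a) - (1 + |x|)),
      sq_nonneg (|x| - 1), mul_nonneg ha0 (abs_nonneg x)]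
  have h4 : (2 : ℝ) * w δ x = Real.sqrt (4 * ((1 - x - a) * (1 + x - a))) := by
    rw [show (4 : ℝ) * ((1 - x - a) * (1 + x - a)) = 2 ^ 2 * ((1 - x - a) * (1 + x - a)) by ring,
      Real.sqrt_mul (by positivity), Real.sqrt_sq (by norm_num)]
    rfl
  rw [h4, phi]
  exact Real.sqrt_le_sqrt key
end

section
/- Let δ > 0 and φ(x) = √(1-x²). If x ∈ (-1,1) satisfies δφ(x) ≤ 1 - |x| (i.e., x ∈ D_{2δ}), then for every u ∈ [x - δφ(x)/2, x + δφ(x)/2] one has φ(u)/2 ≤ φ(x) ≤ 2φ(u). -/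
theorem stmt6 (δ : ℝ) (hδ : 0 < δ) (x : ℝ) (hx : x ∈ Set.Ioo (-1 : ℝ) 1)
    (hxD : δ * phi x ≤ 1 - |x|) :
    ∀ u ∈ Set.Icc (x - δ * phi x / 2) (x + δ * phi x / 2),
      phi u / 2 ≤ phi x ∧ phi x ≤ 2 * phi u := by
  obtain ⟨hx1, hx2⟩ := hx
  intro u hu
  obtain ⟨hu1, hu2⟩ := hu
  have hphi : 0 ≤ δ * phi x := mul_nonneg hδ.le (Real.sqrt_nonneg _)
  have habs : x ≤ |x| := le_abs_self x
  have habs' : -x ≤ |x| := neg_le_abs x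
  have hsq : |x| ^ 2 = x ^ 2 := sq_abs x
  have ha0 : (0:ℝ) ≤ |x| := abs_nonneg x
  have hux : |u - x| ≤ (1 - |x|) / 2 := by
    rw [abs_le]; constructor <;> nlinarith
  have hA : 1 - x ^ 2 ≤ 4 * (1 - u ^ 2) := by
    rw [abs_le] at hux
    nlinarith [sq_nonneg ((1 + |x|) / 2 - u), sq_nonneg ((1 + |x|) / 2 + u)]
  have hB : 1 - u ^ 2 ≤ 4 * (1 - x ^ 2) := by
    rw [abs_le] at hux
    nlinarith [sq_nonneg (u - x), sq_nonneg (u + x)]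
  have key : ∀ a b : ℝ, a ≤ 4 * b → Real.sqrt a ≤ 2 * Real.sqrt b := by
    intro a b hab
    calc Real.sqrt a ≤ Real.sqrt (4 * b) := Real.sqrt_le_sqrt hab
      _ = 2 * Real.sqrt b := by
        rw [show (4:ℝ) * b = 2 ^ 2 * b by ring, Real.sqrt_mul (by norm_num),
          Real.sqrt_sq (by norm_num)]
  constructor
  · have := key _ _ hB
    rw [phi, phi]; linarith
  · exact key _ _ hA
end

section
/- Let 1 ≤ p ≤ ∞, r ∈ ℕ₀, φ(x) = √(1-x²), and γ ≥ 0 with γ > r - 1. Suppose g : (-1,1) → ℝ has g^{(r)} locally absolutely continuous on (-1,1), g^{(r)}(0) = 0, and ‖φ^{r+1} g^{(r+1)}‖_{L_p[-1,1]} < ∞. Then ‖φ^γ g^{(r)}‖_{L_p[-1,1]} ≤ c(p,r,γ)·‖φ^{r+1} g^{(r+1)}‖_{L_p[-1,1]} for a constant c depending only on p, r, γ. -/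
/-!
Write `f = g⁽ʳ⁾`. Since `f 0 = 0`, `f x = ∫₀ˣ f'`, hence
`|φ(x)^γ f(x)| ≤ ∫ K(x,t) |φ(t)^(r+1) f'(t)| dt` with `K(x,t) = φ(x)^γ φ(t)^-(r+1)` for `t`
between `0` and `x`. By the Schur test this integral operator is bounded on every `L_p`,
`1 ≤ p ≤ ∞`, as soon as `∫ K(x,t) dt` and `∫ K(x,t) dx` are bounded.
Since `φ` decreases in `|x|`, the second integral is at most
`φ(t)^(γ-r-1) · 2(1-|t|) ≤ 2 φ(t)^(γ-r+1) ≤ 2`. For the first, `φ(t)^-(r+1) ≤ (1-|t|)^-s`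
for any `s ≥ (r+1)/2`, and `φ(x)^γ ∫₀ˣ (1-t)^-s dt` stays bounded when `s ≤ 1 + γ/2`, `s ≠ 1`;
such an `s` exists precisely because `γ > r - 1`.
-/

open MeasureTheory
open scoped ENNReal NNReal

theorem continuous_phi : Continuous phi := by
  unfold phi; fun_prop

theorem phi_nonneg (x : ℝ) : 0 ≤ phi x := Real.sqrt_nonneg _

theorem phi_le_one (x : ℝ) : phi x ≤ 1 :=
  Real.sqrt_le_one.mpr (by nlinarith)

theorem phi_neg (x : ℝ) : phi (-x) = phi x := by
  simp [phi]

theorem phi_pos {x : ℝ} (hx : |x| < 1) : 0 < phi x :=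
  Real.sqrt_pos.mpr (by nlinarith [sq_abs x, abs_nonneg x])

theorem sq_phi {x : ℝ} (hx : |x| ≤ 1) : phi x ^ 2 = 1 - x ^ 2 :=
  Real.sq_sqrt (by nlinarith [sq_abs x, abs_nonneg x])

theorem phi_le_phi_of_abs_le {x t : ℝ} (h : |t| ≤ |x|) : phi x ≤ phi t :=
  Real.sqrt_le_sqrt (by nlinarith [sq_abs t, sq_abs x, abs_nonneg t])

theorem phi_rpow {x : ℝ} (hx : |x| ≤ 1) (a : ℝ) : phi x ^ a = (1 - x ^ 2) ^ (a / 2) := by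
  rw [← sq_phi hx, ← Real.rpow_natCast, ← Real.rpow_mul (phi_nonneg x)]
  ring_nf

theorem phi_rpow_le {x : ℝ} (hx : |x| ≤ 1) {a : ℝ} (ha : 0 ≤ a) :
    phi x ^ a ≤ 2 ^ (a / 2) * (1 - |x|) ^ (a / 2) := by
  rw [phi_rpow hx, ← Real.mul_rpow zero_le_two (by linarith)]
  exact Real.rpow_le_rpow (by nlinarith [sq_abs x, abs_nonneg x])
    (by nlinarith [sq_abs x, abs_nonneg x]) (by positivity)

theorem phi_rpow_neg_le {x : ℝ} (hx : |x| < 1) {b s : ℝ} (hb : 0 ≤ b) (hbs : b / 2 ≤ s) :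
    phi x ^ (-b) ≤ (1 - |x|) ^ (-s) := by
  have hx' : 0 < 1 - |x| := by linarith
  rw [phi_rpow hx.le]
  calc (1 - x ^ 2) ^ (-b / 2)
      ≤ (1 - |x|) ^ (-b / 2) :=
        Real.rpow_le_rpow_of_nonpos hx' (by nlinarith [sq_abs x, abs_nonneg x]) (by linarith)
    _ ≤ (1 - |x|) ^ (-s) :=
        Real.rpow_le_rpow_of_exponent_ge hx' (by linarith [abs_nonneg x]) (by linarith)

theorem integral_one_sub_rpow_neg {s u : ℝ} (hs : s ≠ 1) (hu : u < 1) :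
    ∫ t in (0 : ℝ)..u, (1 - t) ^ (-s) = (1 - (1 - u) ^ (1 - s)) / (1 - s) := by
  rw [intervalIntegral.integral_comp_sub_left (fun t => t ^ (-s)), sub_zero,
    integral_rpow (Or.inr ⟨by contrapose! hs; linarith, ?_⟩)]
  · rw [Real.one_rpow]; ring_nf
  · rw [Set.mem_uIcc]; rintro (h | h) <;> linarith [h.1, h.2]

theorem one_sub_rpow_mul_integral_le {s c u : ℝ} (hs : s ≠ 1) (hc : 0 ≤ c) (hsc : s - 1 ≤ c)
    (hu0 : 0 ≤ u) (hu : u < 1) :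
    (1 - u) ^ c * ∫ t in (0 : ℝ)..u, (1 - t) ^ (-s) ≤ 1 / |1 - s| := by
  have hu' : 0 < 1 - u := by linarith
  rw [integral_one_sub_rpow_neg hs hu]
  rcases hs.lt_or_gt with hs1 | hs1
  · have hpos : 0 < 1 - s := by linarith
    have h1 : (1 - u) ^ c ≤ 1 := Real.rpow_le_one hu'.le (by linarith) hc
    have h2 : 0 ≤ (1 - u) ^ (1 - s) := by positivity
    have h3 : (1 - u) ^ (1 - s) ≤ 1 := Real.rpow_le_one hu'.le (by linarith) hpos.le
    rw [abs_of_pos hpos]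
    calc (1 - u) ^ c * ((1 - (1 - u) ^ (1 - s)) / (1 - s))
        ≤ 1 * ((1 - (1 - u) ^ (1 - s)) / (1 - s)) :=
          mul_le_mul_of_nonneg_right h1 (div_nonneg (by linarith) hpos.le)
      _ ≤ 1 / (1 - s) := by
          rw [one_mul]; exact div_le_div_of_nonneg_right (by linarith) hpos.le
  · have hpos : 0 < s - 1 := by linarith
    have h1 : (1 - u) ^ c * (1 - u) ^ (1 - s) ≤ 1 := by
      rw [← Real.rpow_add hu']
      exact Real.rpow_le_one hu'.le (by linarith) (by linarith)
    rw [abs_of_neg (by linarith), neg_sub, ← neg_div_neg_eq, neg_sub, neg_sub,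
      mul_div_assoc', div_le_div_iff_of_pos_right hpos]
    nlinarith [Real.rpow_nonneg hu'.le c]

theorem enorm_intervalIntegral_le_lintegral_uIcc (f : ℝ → ℝ) (x : ℝ) :
    ‖∫ t in (0 : ℝ)..x, f t‖ₑ ≤ ∫⁻ t in Set.uIcc 0 x, ‖f t‖ₑ := by
  rw [← ofReal_norm, intervalIntegral.norm_integral_eq_norm_integral_uIoc, ofReal_norm]
  exact (enorm_integral_le_lintegral_enorm _).trans (lintegral_mono_set Set.uIoc_subset_uIcc)

theorem ENNReal.lintegral_mul_rpow_le {β : Type*} [MeasurableSpace β] {ν : Measure β}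
    {k F : β → ℝ≥0∞} (hk : AEMeasurable k ν) (hF : AEMeasurable F ν) {q : ℝ} (hq : 1 ≤ q) :
    (∫⁻ t, k t * F t ∂ν) ^ q ≤ (∫⁻ t, k t ∂ν) ^ (q - 1) * ∫⁻ t, k t * F t ^ q ∂ν := by
  have hq0 : 0 < q := by linarith
  have holder := ENNReal.lintegral_mul_norm_pow_le (g := fun t => k t * F t ^ q) hk
    (hk.mul (hF.pow_const q)) (p := 1 - q⁻¹) (q := q⁻¹) (by simp [inv_le_one_of_one_le₀ hq])
    (by positivity) (by ring)
  have hsplit : ∀ t, k t ^ (1 - q⁻¹) * (k t * F t ^ q) ^ q⁻¹ = k t * F t := fun t => by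
    rw [ENNReal.mul_rpow_of_nonneg _ _ (by positivity), ← ENNReal.rpow_mul,
      mul_inv_cancel₀ hq0.ne', ENNReal.rpow_one, ← mul_assoc,
      ← ENNReal.rpow_add_of_nonneg _ _ (by simp [inv_le_one_of_one_le₀ hq]) (by positivity),
      sub_add_cancel, ENNReal.rpow_one]
  simp only [hsplit] at holder
  calc (∫⁻ t, k t * F t ∂ν) ^ q
      ≤ ((∫⁻ t, k t ∂ν) ^ (1 - q⁻¹) * (∫⁻ t, k t * F t ^ q ∂ν) ^ q⁻¹) ^ q :=
        ENNReal.rpow_le_rpow holder hq0.le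
    _ = (∫⁻ t, k t ∂ν) ^ (q - 1) * ∫⁻ t, k t * F t ^ q ∂ν := by
        rw [ENNReal.mul_rpow_of_nonneg _ _ hq0.le, ← ENNReal.rpow_mul, ← ENNReal.rpow_mul,
          inv_mul_cancel₀ hq0.ne', ENNReal.rpow_one, sub_mul, one_mul, inv_mul_cancel₀ hq0.ne']

section SchurTest

variable {α β : Type*} [MeasurableSpace α] [MeasurableSpace β] {μ : Measure α} {ν : Measure β}
  [SFinite μ] [SFinite ν] {K : α → β → ℝ≥0∞} {F : β → ℝ≥0∞} {A : ℝ≥0}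

theorem lintegral_rpow_lintegral_mul_le (hK : Measurable (Function.uncurry K))
    (hF : AEMeasurable F ν) (hrow : ∀ᵐ x ∂μ, ∫⁻ t, K x t ∂ν ≤ A)
    (hcol : ∀ᵐ t ∂ν, ∫⁻ x, K x t ∂μ ≤ A) {q : ℝ} (hq : 1 ≤ q) :
    ∫⁻ x, (∫⁻ t, K x t * F t ∂ν) ^ q ∂μ ≤ (A : ℝ≥0∞) ^ q * ∫⁻ t, F t ^ q ∂ν := by
  have hFq : AEMeasurable (fun t => F t ^ q) ν := hF.pow_const q
  calc ∫⁻ x, (∫⁻ t, K x t * F t ∂ν) ^ q ∂μ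
      ≤ ∫⁻ x, (A : ℝ≥0∞) ^ (q - 1) * ∫⁻ t, K x t * F t ^ q ∂ν ∂μ := by
        refine lintegral_mono_ae ?_
        filter_upwards [hrow] with x hx
        exact (ENNReal.lintegral_mul_rpow_le (hK.comp measurable_prodMk_left).aemeasurable
          hF hq).trans (mul_le_mul_left (ENNReal.rpow_le_rpow hx (by linarith)) _)
    _ = (A : ℝ≥0∞) ^ (q - 1) * ∫⁻ t, (∫⁻ x, K x t ∂μ) * F t ^ q ∂ν := by
        rw [lintegral_const_mul' _ _ (ENNReal.rpow_ne_top_of_nonneg (by linarith)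
          ENNReal.coe_ne_top), lintegral_lintegral_swap (hK.aemeasurable.mul hFq.comp_snd)]
        exact congrArg _ (lintegral_congr fun t =>
          lintegral_mul_const _ (hK.comp measurable_prodMk_right))
    _ ≤ (A : ℝ≥0∞) ^ (q - 1) * ∫⁻ t, A * F t ^ q ∂ν := by
        refine mul_le_mul_right (lintegral_mono_ae ?_) _
        filter_upwards [hcol] with t ht
        exact mul_le_mul_left ht _
    _ = (A : ℝ≥0∞) ^ q * ∫⁻ t, F t ^ q ∂ν := by
        rw [lintegral_const_mul'' _ hFq, ← mul_assoc]
        nth_rw 2 [← ENNReal.rpow_one (A : ℝ≥0∞)]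
        rw [← ENNReal.rpow_add_of_nonneg _ _ (by linarith) zero_le_one, sub_add_cancel]

theorem eLpNorm_lintegral_mul_le (hK : Measurable (Function.uncurry K))
    (hF : AEMeasurable F ν) (hrow : ∀ᵐ x ∂μ, ∫⁻ t, K x t ∂ν ≤ A)
    (hcol : ∀ᵐ t ∂ν, ∫⁻ x, K x t ∂μ ≤ A) {p : ℝ≥0∞} (hp : 1 ≤ p) :
    eLpNorm (fun x => ∫⁻ t, K x t * F t ∂ν) p μ ≤ A * eLpNorm F p ν := by
  rcases eq_or_ne p ∞ with rfl | hp_top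
  · simp only [eLpNorm_exponent_top, eLpNormEssSup, enorm_eq_self]
    refine essSup_le_of_ae_le _ ?_
    filter_upwards [hrow] with x hx
    calc ∫⁻ t, K x t * F t ∂ν
        ≤ ∫⁻ t, K x t * essSup F ν ∂ν := lintegral_mono_ae <| by
          filter_upwards [ENNReal.ae_le_essSup F] with t ht
          exact mul_le_mul_right ht _
      _ = (∫⁻ t, K x t ∂ν) * essSup F ν := lintegral_mul_const _ (hK.comp measurable_prodMk_left)
      _ ≤ A * essSup F ν := mul_le_mul_left hx _
  · have hp0 : p ≠ 0 := (zero_lt_one.trans_le hp).ne'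
    have hq : 1 ≤ p.toReal := by
      simpa using ENNReal.toReal_mono hp_top hp
    have hq0 : 0 < p.toReal := zero_lt_one.trans_le hq
    simp only [eLpNorm_eq_lintegral_rpow_enorm_toReal hp0 hp_top, enorm_eq_self]
    calc (∫⁻ x, (∫⁻ t, K x t * F t ∂ν) ^ p.toReal ∂μ) ^ (1 / p.toReal)
        ≤ ((A : ℝ≥0∞) ^ p.toReal * ∫⁻ t, F t ^ p.toReal ∂ν) ^ (1 / p.toReal) :=
          ENNReal.rpow_le_rpow (lintegral_rpow_lintegral_mul_le hK hF hrow hcol hq)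
            (by positivity)
      _ = A * (∫⁻ t, F t ^ p.toReal ∂ν) ^ (1 / p.toReal) := by
          rw [ENNReal.mul_rpow_of_nonneg _ _ (by positivity), ← ENNReal.rpow_mul,
            mul_one_div_cancel hq0.ne', ENNReal.rpow_one]

end SchurTest

/-- The closed interval `uIcc 0 x` (rather than `uIoc 0 x`) makes the kernel invariant under
`(x, t) ↦ (-x, -t)`. -/
noncomputable def phiKernel (a b x t : ℝ) : ℝ≥0∞ :=
  (Set.uIcc 0 x).indicator (fun t => ENNReal.ofReal (phi x ^ a * phi t ^ (-b))) t

theorem measurable_phiKernel (a b : ℝ) : Measurable (Function.uncurry (phiKernel a b)) := by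
  have hset : MeasurableSet {z : ℝ × ℝ | z.2 ∈ Set.uIcc 0 z.1} :=
    (measurableSet_le (measurable_const.min measurable_fst) measurable_snd).inter
      (measurableSet_le measurable_snd (measurable_const.max measurable_fst))
  have hphi := continuous_phi.measurable
  exact ENNReal.measurable_ofReal.comp (((hphi.comp measurable_fst).pow_const a).mul
    ((hphi.comp measurable_snd).pow_const (-b))) |>.indicator hset

theorem phiKernel_neg_neg (a b x t : ℝ) : phiKernel a b (-x) (-t) = phiKernel a b x t := by
  have hmem : -t ∈ Set.uIcc 0 (-x) ↔ t ∈ Set.uIcc 0 x := by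
    rw [← Set.mem_neg, Set.neg_uIcc, neg_zero, neg_neg]
  classical
  rw [phiKernel, phiKernel, Set.indicator_apply, Set.indicator_apply, hmem, phi_neg, phi_neg]

theorem lintegral_phiKernel_le {a b s : ℝ} (ha : 0 ≤ a) (hb : 0 ≤ b) (hbs : b / 2 ≤ s)
    (hsa : s ≤ 1 + a / 2) (hs : s ≠ 1) {x : ℝ} (hx : |x| < 1) :
    ∫⁻ t, phiKernel a b x t ≤ ENNReal.ofReal (2 ^ (a / 2) / |1 - s|) := by
  wlog hx0 : 0 ≤ x generalizing x
  · have hflip : ∀ t, phiKernel a b x (-t) = phiKernel a b (-x) t := fun t => by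
      rw [← phiKernel_neg_neg, neg_neg]
    rw [← lintegral_neg_eq_self, lintegral_congr hflip]
    exact this (by rwa [abs_neg]) (by linarith)
  have hx1 : x < 1 := by rwa [abs_of_nonneg hx0] at hx
  set c : ℝ := 2 ^ (a / 2) * (1 - x) ^ (a / 2)
  have hint : IntegrableOn (fun t => c * (1 - t) ^ (-s)) (Set.Icc 0 x) := by
    refine ContinuousOn.integrableOn_Icc (continuousOn_const.mul ?_)
    exact (continuousOn_const.sub continuousOn_id).rpow_const fun t ht =>
      Or.inl (sub_pos.mpr (ht.2.trans_lt hx1)).ne'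
  calc ∫⁻ t, phiKernel a b x t
      = ∫⁻ t in Set.Icc 0 x, ENNReal.ofReal (phi x ^ a * phi t ^ (-b)) := by
        rw [← Set.uIcc_of_le hx0, ← lintegral_indicator measurableSet_uIcc]; rfl
    _ ≤ ∫⁻ t in Set.Icc 0 x, ENNReal.ofReal (c * (1 - t) ^ (-s)) := by
        refine setLIntegral_mono' measurableSet_Icc fun t ht => ENNReal.ofReal_le_ofReal ?_
        have ht1 : |t| < 1 := by rw [abs_of_nonneg ht.1]; linarith [ht.2]
        have hxa := phi_rpow_le hx.le ha
        have htb := phi_rpow_neg_le ht1 hb hbs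
        rw [abs_of_nonneg hx0] at hxa
        rw [abs_of_nonneg ht.1] at htb
        exact mul_le_mul hxa htb (Real.rpow_nonneg (phi_nonneg t) _) (by positivity)
    _ = ENNReal.ofReal (c * ∫ t in (0 : ℝ)..x, (1 - t) ^ (-s)) := by
        rw [← ofReal_integral_eq_lintegral_ofReal hint
          (ae_restrict_of_forall_mem measurableSet_Icc fun t ht => mul_nonneg (by positivity)
            (Real.rpow_nonneg (by linarith [ht.2]) _)), integral_Icc_eq_integral_Ioc,
          ← intervalIntegral.integral_of_le hx0, intervalIntegral.integral_const_mul]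
    _ ≤ ENNReal.ofReal (2 ^ (a / 2) / |1 - s|) := by
        refine ENNReal.ofReal_le_ofReal ?_
        simpa only [c, mul_assoc, mul_one_div] using mul_le_mul_of_nonneg_left
          (one_sub_rpow_mul_integral_le hs (by positivity) (by linarith) hx0 hx1)
          (by positivity : (0 : ℝ) ≤ 2 ^ (a / 2))

theorem volume_abs_le_abs_inter_Ioo_le {t : ℝ} (ht : |t| ≤ 1) :
    volume ({x : ℝ | |t| ≤ |x|} ∩ Set.Ioo (-1) 1) ≤ ENNReal.ofReal (2 * (1 - |t|)) := by
  have hsub : {x : ℝ | |t| ≤ |x|} ∩ Set.Ioo (-1) 1 ⊆ Set.Icc (-1) (-|t|) ∪ Set.Icc |t| 1 := by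
    rintro x ⟨hxS, hx1, hx2⟩
    change |t| ≤ |x| at hxS
    rcases le_total 0 x with hx0 | hx0
    · rw [abs_of_nonneg hx0] at hxS
      exact Or.inr ⟨hxS, hx2.le⟩
    · rw [abs_of_nonpos hx0] at hxS
      exact Or.inl ⟨hx1.le, by linarith⟩
  calc volume ({x : ℝ | |t| ≤ |x|} ∩ Set.Ioo (-1) 1)
      ≤ volume (Set.Icc (-1) (-|t|)) + volume (Set.Icc |t| 1) :=
        (measure_mono hsub).trans (measure_union_le _ _)
    _ = ENNReal.ofReal (2 * (1 - |t|)) := by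
        rw [Real.volume_Icc, Real.volume_Icc, ← ENNReal.ofReal_add (by linarith) (by linarith)]
        ring_nf

theorem phi_rpow_mul_phi_rpow_neg_mul_le_one {a b t : ℝ} (hab : b ≤ a + 2) (ht : |t| < 1) :
    phi t ^ a * phi t ^ (-b) * (1 - |t|) ≤ 1 := by
  have hpos : 0 < phi t := phi_pos ht
  calc phi t ^ a * phi t ^ (-b) * (1 - |t|) ≤ phi t ^ a * phi t ^ (-b) * phi t ^ (2 : ℝ) := by
        refine mul_le_mul_of_nonneg_left ?_ (by positivity)
        rw [Real.rpow_two, sq_phi ht.le]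
        nlinarith [sq_abs t, abs_nonneg t]
    _ = phi t ^ (a + -b + 2) := by rw [Real.rpow_add hpos, Real.rpow_add hpos]
    _ ≤ 1 := Real.rpow_le_one (phi_nonneg t) (phi_le_one t) (by linarith)

theorem setLIntegral_phiKernel_le_two {a b : ℝ} (ha : 0 ≤ a) (hab : b ≤ a + 2) {t : ℝ}
    (ht : |t| < 1) : ∫⁻ x in Set.Ioo (-1) 1, phiKernel a b x t ≤ 2 := by
  set c : ℝ := phi t ^ a * phi t ^ (-b)
  have hc : 0 ≤ c :=
    mul_nonneg (Real.rpow_nonneg (phi_nonneg t) _) (Real.rpow_nonneg (phi_nonneg t) _)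
  set S : Set ℝ := {x | |t| ≤ |x|}
  have hS : MeasurableSet S := measurableSet_le measurable_const measurable_abs
  have hbound : ∀ x, phiKernel a b x t ≤ S.indicator (fun _ => ENNReal.ofReal c) x := by
    intro x
    by_cases hmem : t ∈ Set.uIcc 0 x
    · have habs : |t| ≤ |x| := by simpa using Set.abs_sub_left_of_mem_uIcc hmem
      rw [phiKernel, Set.indicator_of_mem hmem, Set.indicator_of_mem (show x ∈ S from habs)]
      exact ENNReal.ofReal_le_ofReal (mul_le_mul_of_nonneg_right
        (Real.rpow_le_rpow (phi_nonneg x) (phi_le_phi_of_abs_le habs) ha)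
        (Real.rpow_nonneg (phi_nonneg t) _))
    · rw [phiKernel, Set.indicator_of_notMem hmem]
      exact zero_le
  calc ∫⁻ x in Set.Ioo (-1) 1, phiKernel a b x t
      ≤ ∫⁻ x in Set.Ioo (-1) 1, S.indicator (fun _ => ENNReal.ofReal c) x := lintegral_mono hbound
    _ = ENNReal.ofReal c * volume (S ∩ Set.Ioo (-1) 1) := by
        rw [lintegral_indicator_const hS, Measure.restrict_apply hS]
    _ ≤ ENNReal.ofReal c * ENNReal.ofReal (2 * (1 - |t|)) :=
        mul_le_mul_right (volume_abs_le_abs_inter_Ioo_le ht.le) _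
    _ ≤ 2 := by
        rw [← ENNReal.ofReal_mul hc, ← ENNReal.ofReal_ofNat 2]
        exact ENNReal.ofReal_le_ofReal (by linarith [phi_rpow_mul_phi_rpow_neg_mul_le_one hab ht])

theorem exists_phiKernel_bound {a b : ℝ} (ha : 0 ≤ a) (hb : 0 ≤ b) (hab : b < a + 2) :
    ∃ A : ℝ≥0, (∀ x, |x| < 1 → ∫⁻ t in Set.Ioo (-1) 1, phiKernel a b x t ≤ A) ∧
      ∀ t, |t| < 1 → ∫⁻ x in Set.Ioo (-1) 1, phiKernel a b x t ≤ A := by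
  obtain ⟨s, hbs, hsa, hs⟩ : ∃ s, b / 2 ≤ s ∧ s ≤ 1 + a / 2 ∧ s ≠ 1 := by
    rcases ha.eq_or_lt with rfl | ha'
    · exact ⟨(b / 2 + 1) / 2, by linarith, by linarith, by intro h; linarith⟩
    · exact ⟨1 + a / 2, by linarith, le_rfl, by intro h; linarith⟩
  refine ⟨max (Real.toNNReal (2 ^ (a / 2) / |1 - s|)) 2, fun x hx => ?_, fun t ht => ?_⟩
  · calc ∫⁻ t in Set.Ioo (-1) 1, phiKernel a b x t
        ≤ ∫⁻ t, phiKernel a b x t := setLIntegral_le_lintegral _ _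
      _ ≤ ENNReal.ofReal (2 ^ (a / 2) / |1 - s|) := lintegral_phiKernel_le ha hb hbs hsa hs hx
      _ ≤ _ := by rw [ENNReal.ofReal]; exact_mod_cast le_max_left _ _
  · exact (setLIntegral_phiKernel_le_two ha hab.le ht).trans (by exact_mod_cast le_max_right _ _)

theorem enorm_phi_rpow_mul_integral_le (a b : ℝ) (f : ℝ → ℝ) {x : ℝ} (hx : |x| < 1) :
    ‖phi x ^ a * ∫ t in (0 : ℝ)..x, f t‖ₑ ≤
      ∫⁻ t in Set.Ioo (-1) 1, phiKernel a b x t * ‖phi t ^ b * f t‖ₑ := by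
  have hsub : Set.uIcc 0 x ⊆ Set.Ioo (-1) 1 :=
    Set.OrdConnected.uIcc_subset inferInstance (by norm_num) (abs_lt.mp hx)
  have hcancel : ∀ t ∈ Set.uIcc 0 x, ENNReal.ofReal (phi x ^ a) * ‖f t‖ₑ =
      ENNReal.ofReal (phi x ^ a * phi t ^ (-b)) * ‖phi t ^ b * f t‖ₑ := by
    intro t ht
    have habs : |t| ≤ |x| := by simpa using Set.abs_sub_left_of_mem_uIcc ht
    have hpos : 0 < phi t := phi_pos (habs.trans_lt hx)
    rw [enorm_mul, Real.enorm_of_nonneg (Real.rpow_nonneg hpos.le _), ← mul_assoc,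
      ← ENNReal.ofReal_mul (mul_nonneg (Real.rpow_nonneg (phi_nonneg x) _)
        (Real.rpow_nonneg hpos.le _)),
      mul_assoc, ← Real.rpow_add hpos, neg_add_cancel, Real.rpow_zero, mul_one]
  have hsupp : Function.support (fun t => phiKernel a b x t * ‖phi t ^ b * f t‖ₑ) ⊆
      Set.Ioo (-1) 1 :=
    (Function.support_mul_subset_left _ _).trans (Set.support_indicator_subset.trans hsub)
  rw [setLIntegral_eq_of_support_subset hsupp]
  calc ‖phi x ^ a * ∫ t in (0 : ℝ)..x, f t‖ₑ
      = ENNReal.ofReal (phi x ^ a) * ‖∫ t in (0 : ℝ)..x, f t‖ₑ := by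
        rw [enorm_mul, Real.enorm_of_nonneg (Real.rpow_nonneg (phi_nonneg x) _)]
    _ ≤ ENNReal.ofReal (phi x ^ a) * ∫⁻ t in Set.uIcc 0 x, ‖f t‖ₑ :=
        mul_le_mul_right (enorm_intervalIntegral_le_lintegral_uIcc f x) _
    _ = ∫⁻ t in Set.uIcc 0 x, ENNReal.ofReal (phi x ^ a * phi t ^ (-b)) * ‖phi t ^ b * f t‖ₑ := by
        rw [← lintegral_const_mul' _ _ ENNReal.ofReal_ne_top]
        exact setLIntegral_congr_fun measurableSet_uIcc hcancel
    _ = ∫⁻ t, phiKernel a b x t * ‖phi t ^ b * f t‖ₑ := by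
        rw [← lintegral_indicator measurableSet_uIcc]
        simp only [phiKernel, Set.indicator_mul_left]

theorem exists_eLpNorm_phi_rpow_mul_integral_le {a b : ℝ} (ha : 0 ≤ a) (hb : 0 ≤ b)
    (hab : b < a + 2) :
    ∃ A : ℝ≥0, ∀ f : ℝ → ℝ, AEMeasurable f (volume.restrict (Set.Ioo (-1) 1)) →
      ∀ p : ℝ≥0∞, 1 ≤ p →
        eLpNorm (fun x => phi x ^ a * ∫ t in (0 : ℝ)..x, f t) p
            (volume.restrict (Set.Ioo (-1) 1)) ≤
          A * eLpNorm (fun t => phi t ^ b * f t) p (volume.restrict (Set.Ioo (-1) 1)) := by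
  obtain ⟨A, hrow, hcol⟩ := exists_phiKernel_bound ha hb hab
  refine ⟨A, fun f hf p hp => ?_⟩
  have hIoo : ∀ᵐ x ∂(volume.restrict (Set.Ioo (-1 : ℝ) 1)), |x| < 1 := by
    filter_upwards [ae_restrict_mem measurableSet_Ioo] with x hx using abs_lt.mpr hx
  calc eLpNorm (fun x => phi x ^ a * ∫ t in (0 : ℝ)..x, f t) p (volume.restrict (Set.Ioo (-1) 1))
      ≤ eLpNorm (fun x => ∫⁻ t in Set.Ioo (-1) 1, phiKernel a b x t * ‖phi t ^ b * f t‖ₑ) p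
          (volume.restrict (Set.Ioo (-1) 1)) :=
        eLpNorm_mono_enorm_ae (hIoo.mono fun x hx => enorm_phi_rpow_mul_integral_le a b f hx)
    _ ≤ A * eLpNorm (fun t => ‖phi t ^ b * f t‖ₑ) p (volume.restrict (Set.Ioo (-1) 1)) :=
        eLpNorm_lintegral_mul_le (measurable_phiKernel a b)
          ((continuous_phi.measurable.pow_const b).aemeasurable.mul hf).enorm
          (hIoo.mono hrow) (hIoo.mono hcol) hp
    _ = A * eLpNorm (fun t => phi t ^ b * f t) p (volume.restrict (Set.Ioo (-1) 1)) := by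
        rw [eLpNorm_enorm]

theorem stmt13 (p : ℝ≥0∞) (hp : 1 ≤ p) (r : ℕ) (γ : ℝ) (hγ0 : 0 ≤ γ)
    (hγ : (r : ℝ) - 1 < γ) :
    ∃ c : ℝ≥0, ∀ g : ℝ → ℝ,
      (∀ x ∈ Set.Ioo (-1 : ℝ) 1, ∀ y ∈ Set.Ioo (-1 : ℝ) 1,
        iteratedDeriv r g y - iteratedDeriv r g x =
          ∫ t in x..y, iteratedDeriv (r + 1) g t) →
      iteratedDeriv r g 0 = 0 →
      eLpNorm (fun x => phi x ^ (r + 1) * iteratedDeriv (r + 1) g x) p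
        (volume.restrict (Set.Icc (-1 : ℝ) 1)) ≠ ⊤ →
      eLpNorm (fun x => phi x ^ γ * iteratedDeriv r g x) p
        (volume.restrict (Set.Icc (-1 : ℝ) 1)) ≤
        c * eLpNorm (fun x => phi x ^ (r + 1) * iteratedDeriv (r + 1) g x) p
          (volume.restrict (Set.Icc (-1 : ℝ) 1)) := by
  set b : ℝ := ((r + 1 : ℕ) : ℝ)
  obtain ⟨A, hA⟩ := exists_eLpNorm_phi_rpow_mul_integral_le hγ0 (b := b) (by positivity)
    (by push_cast [b]; linarith)
  refine ⟨A, fun g hFTC h0 _ => ?_⟩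
  have hg' : Measurable (iteratedDeriv (r + 1) g) := by
    rw [iteratedDeriv_succ]; exact measurable_deriv _
  have hg : ∀ᵐ x ∂(volume.restrict (Set.Ioo (-1 : ℝ) 1)),
      phi x ^ γ * iteratedDeriv r g x =
        phi x ^ γ * ∫ t in (0 : ℝ)..x, iteratedDeriv (r + 1) g t := by
    filter_upwards [ae_restrict_mem measurableSet_Ioo] with x hx
    rw [← hFTC 0 (by norm_num) x hx, h0, sub_zero]
  have hpow : ∀ x, phi x ^ (r + 1) = phi x ^ b := fun x => (Real.rpow_natCast _ _).symm
  rw [← Measure.restrict_congr_set Ioo_ae_eq_Icc, eLpNorm_congr_ae hg]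
  simpa only [hpow] using hA _ hg'.aemeasurable p hp
end
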